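/- Let N : ℕ, let f : ℝ → ℂ be differentiable at ξ(ρ), and let ρ : Fin N → ℂ satisfy ρ ≠ 0 and ξ(ρ) < 1. Then P_f is Fréchet differentiable over ℝ at ρ, and its derivative L maps every tangent vector into the B-orthogonal complement of the projected point: B(P_f(ρ), L(v)) = 0 for all v : Fin N → ℂ. (Toy-model form of Proposition 2, item 3, equations (LinProjGamma-orth)/(linprojgamma-orth): variations of the projection are consistent with the null constraint.) -/

import Mathlib

noncomputable section

open scoped BigOperators

namespace PureSpinorToy

variable {N : ℕ}

/-- Complex bilinear pairing `B(ρ,σ) = ∑ I, ρ_I σ_I`. -/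
def B (ρ σ : Fin N → ℂ) : ℂ := ∑ I, ρ I * σ I

/-- Hermitian inner product `⟪ρ,σ⟫ = ∑ I, conj(ρ_I) σ_I`. -/
def hInner (ρ σ : Fin N → ℂ) : ℂ := ∑ I, (starRingEnd ℂ) (ρ I) * σ I

/-- Norm square `‖ρ‖² = ⟪ρ,ρ⟫` (a nonnegative real). -/
def nsq (ρ : Fin N → ℂ) : ℝ := (hInner ρ ρ).re

/-- Componentwise complex conjugation `ρ̄`. -/
def conjFun (ρ : Fin N → ℂ) : Fin N → ℂ := fun I => (starRingEnd ℂ) (ρ I)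

/-- `ζ(ρ) = B(ρ,ρ)/‖ρ‖²`. -/
def zeta (ρ : Fin N → ℂ) : ℂ := B ρ ρ / (nsq ρ : ℂ)

/-- `ξ(ρ) = |ζ(ρ)|²`. -/
def xi (ρ : Fin N → ℂ) : ℝ := Complex.normSq (zeta ρ)

/-- The family of projection maps
`P_f(ρ) = f(ξ(ρ)) • (ρ − (ζ(ρ)/(1+√(1−ξ(ρ)))) • ρ̄)`. -/
def P (f : ℝ → ℂ) (ρ : Fin N → ℂ) : Fin N → ℂ :=
  f (xi ρ) • (ρ - (zeta ρ / (1 + (Real.sqrt (1 - xi ρ) : ℂ))) • conjFun ρ)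

/-- The special function `h(t) = (1+√(1−t))/(2√(1−t))`. -/
def h (t : ℝ) : ℂ := (((1 + Real.sqrt (1 - t)) / (2 * Real.sqrt (1 - t)) : ℝ) : ℂ)

/-- The potential `Φ(ρ) = (‖ρ‖²/2)(1+√(1−ξ(ρ)))`. -/
def Phi (ρ : Fin N → ℂ) : ℝ := (nsq ρ / 2) * (1 + Real.sqrt (1 - xi ρ))

/-!
On the open set `{σ ≠ 0, ξ(σ) < 1}` the point `P_f(σ)` is `B`-null: with `ζ = ζ(σ)`, `n = ‖σ‖²`,
`s = √(1 - |ζ|²)` and `c = ζ/(1+s)`, the relations `B(σ,σ) = ζ n`, `B(σ,σ̄) = n`, `B(σ̄,σ̄) = ζ̄ n`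
give `B(σ - cσ̄, σ - cσ̄) = n (ζ - 2c + c² ζ̄) = n ζ (s² - 1 + |ζ|²)/(1+s)² = 0`.
Differentiating `B(P_f σ, P_f σ) = 0` at `ρ` yields `2 B(P_f ρ, DP_f(ρ) v) = 0`.
-/

open Filter Topology

lemma B_comm (σ τ : Fin N → ℂ) : B σ τ = B τ σ := by
  simp only [B, mul_comm]

lemma nsq_eq_sum_normSq (σ : Fin N → ℂ) : nsq σ = ∑ I, Complex.normSq (σ I) := by
  simp [nsq, hInner, ← Complex.normSq_eq_conj_mul_self]

lemma nsq_pos {σ : Fin N → ℂ} (hσ : σ ≠ 0) : 0 < nsq σ := by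
  obtain ⟨I, hI⟩ := Function.ne_iff.mp hσ
  rw [nsq_eq_sum_normSq]
  exact Finset.sum_pos' (fun i _ => Complex.normSq_nonneg _)
    ⟨I, Finset.mem_univ I, Complex.normSq_pos.mpr hI⟩

lemma B_conjFun_right (σ : Fin N → ℂ) : B σ (conjFun σ) = nsq σ := by
  simp [B, conjFun, Complex.mul_conj, nsq_eq_sum_normSq]

lemma B_conjFun_left (σ : Fin N → ℂ) : B (conjFun σ) σ = nsq σ := by
  rw [B_comm, B_conjFun_right]

lemma B_conjFun_conjFun (σ : Fin N → ℂ) :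
    B (conjFun σ) (conjFun σ) = starRingEnd ℂ (B σ σ) := by
  simp [B, conjFun]

lemma B_self_eq_zeta_mul_nsq {σ : Fin N → ℂ} (hσ : σ ≠ 0) : B σ σ = zeta σ * nsq σ := by
  rw [zeta, div_mul_cancel₀]
  exact_mod_cast (nsq_pos hσ).ne'

lemma B_smul_sub_smul_self (a c : ℂ) (σ τ : Fin N → ℂ) :
    B (a • (σ - c • τ)) (a • (σ - c • τ)) =
      a ^ 2 * (B σ σ - c * B σ τ - c * B τ σ + c ^ 2 * B τ τ) := by
  simp only [B, Pi.smul_apply, Pi.sub_apply, smul_eq_mul, Finset.mul_sum, ← Finset.sum_sub_distrib,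
    ← Finset.sum_add_distrib]
  exact Finset.sum_congr rfl fun I _ => by ring

lemma one_add_sqrt_ne_zero (t : ℝ) : (1 : ℂ) + (Real.sqrt t : ℂ) ≠ 0 := by
  exact_mod_cast (add_pos_of_pos_of_nonneg one_pos (Real.sqrt_nonneg t)).ne'

theorem B_P_self_eq_zero (f : ℝ → ℂ) {σ : Fin N → ℂ} (hσ : σ ≠ 0) (hξ : xi σ ≤ 1) :
    B (P f σ) (P f σ) = 0 := by
  rw [P, B_smul_sub_smul_self, B_conjFun_right, B_conjFun_left, B_conjFun_conjFun,
    B_self_eq_zeta_mul_nsq hσ, map_mul, Complex.conj_ofReal]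
  have hs : (Real.sqrt (1 - xi σ) : ℂ) ^ 2 = 1 - zeta σ * starRingEnd ℂ (zeta σ) := by
    rw [Complex.mul_conj, ← Complex.ofReal_pow, Real.sq_sqrt (by linarith), xi]
    push_cast
    rfl
  have hs1 := one_add_sqrt_ne_zero (1 - xi σ)
  apply mul_eq_zero_of_right
  field_simp
  linear_combination (zeta σ * nsq σ) * hs

lemma differentiable_normSq : Differentiable ℝ Complex.normSq := by
  simp only [funext Complex.normSq_apply]
  fun_prop

lemma differentiable_nsq : Differentiable ℝ (nsq (N := N)) := by
  unfold nsq hInner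
  fun_prop

lemma differentiable_conjFun : Differentiable ℝ (conjFun (N := N)) := by
  unfold conjFun
  fun_prop

lemma differentiableAt_zeta {ρ : Fin N → ℂ} (hρ : ρ ≠ 0) : DifferentiableAt ℝ zeta ρ := by
  have hB : Differentiable ℝ fun σ : Fin N → ℂ => B σ σ := by
    unfold B
    fun_prop
  have hn : Differentiable ℝ fun σ : Fin N → ℂ => (nsq σ : ℂ) :=
    Complex.ofRealCLM.differentiable.comp differentiable_nsq
  unfold zeta
  simp only [div_eq_mul_inv]
  exact hB.differentiableAt.mul (hn.differentiableAt.inv (by exact_mod_cast (nsq_pos hρ).ne'))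

lemma differentiableAt_xi {ρ : Fin N → ℂ} (hρ : ρ ≠ 0) : DifferentiableAt ℝ xi ρ :=
  differentiable_normSq.differentiableAt.comp ρ (differentiableAt_zeta hρ)

lemma differentiableAt_P {f : ℝ → ℂ} {ρ : Fin N → ℂ} (hρ : ρ ≠ 0) (hξ : xi ρ < 1)
    (hf : DifferentiableAt ℝ f (xi ρ)) : DifferentiableAt ℝ (P f) ρ := by
  have hxi := differentiableAt_xi hρ
  have hs : DifferentiableAt ℝ (fun σ => (Real.sqrt (1 - xi σ) : ℂ)) ρ :=
    Complex.ofRealCLM.differentiableAt.comp ρ ((hxi.const_sub 1).sqrt (sub_pos.mpr hξ).ne')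
  have hc : DifferentiableAt ℝ (fun σ => zeta σ / (1 + (Real.sqrt (1 - xi σ) : ℂ))) ρ := by
    simp only [div_eq_mul_inv]
    exact (differentiableAt_zeta hρ).mul (hs.const_add 1 |>.inv (one_add_sqrt_ne_zero _))
  exact (hf.comp ρ hxi).smul
    (differentiableAt_id.sub (hc.smul differentiable_conjFun.differentiableAt))

lemma hasFDerivAt_B_self (y : Fin N → ℂ) :
    HasFDerivAt (fun z => B z z)
      (∑ I, (2 * y I) • ContinuousLinearMap.proj (R := ℝ) (φ := fun _ : Fin N => ℂ) I) y := by
  refine HasFDerivAt.fun_sum fun I _ => ?_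
  refine ((hasFDerivAt_apply (𝕜 := ℝ) I y).fun_mul (hasFDerivAt_apply I y)).congr_fderiv ?_
  ext w
  simp only [add_apply, smul_apply, smul_eq_mul]
  ring

theorem B_fderiv_eq_zero_of_eventually_B_self_eq_zero {E : Type*} [NormedAddCommGroup E]
    [NormedSpace ℝ E] {g : E → Fin N → ℂ} {x : E} (hg : DifferentiableAt ℝ g x)
    (hnull : ∀ᶠ y in 𝓝 x, B (g y) (g y) = 0) (v : E) : B (g x) (fderiv ℝ g x v) = 0 := by
  have hderiv := (hasFDerivAt_B_self (g x)).comp x hg.hasFDerivAt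
  have hzero := (hasFDerivAt_const (𝕜 := ℝ) (0 : ℂ) x).congr_of_eventuallyEq hnull
  have := congr($(hderiv.unique hzero) v)
  simpa [B, ← Finset.mul_sum, mul_assoc] using this

/-- Toy model, Proposition 2 item 3 (LinProjGamma-orth)/(linprojgamma-orth): the
derivative of `P_f` maps every tangent vector into the `B`-orthogonal complement of
the projected point. -/
theorem statement14 {N : ℕ} (f : ℝ → ℂ) (ρ : Fin N → ℂ) (hρ : ρ ≠ 0) (hξ : xi ρ < 1)
    (hfd : DifferentiableAt ℝ f (xi ρ)) :
    DifferentiableAt ℝ (P f) ρ ∧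
      ∀ v, B (P f ρ) (fderiv ℝ (P f) ρ v) = 0 := by
  have hP := differentiableAt_P hρ hξ hfd
  refine ⟨hP, B_fderiv_eq_zero_of_eventually_B_self_eq_zero hP ?_⟩
  filter_upwards [eventually_ne_nhds hρ,
    (differentiableAt_xi hρ).continuousAt.eventually_lt_const hξ] with σ hσ hσξ
  exact B_P_self_eq_zero f hσ hσξ.le

end PureSpinorToy
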